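/- arXiv:1810.11744 — 4 statements merged into one kernel-verified Lean document; each statement's English description precedes it below -/
import Mathlib

section
/- Let N and k be even positive integers with k ≤ N - 2. The map f that sends a symmetric spine (s_1, ..., s_k) in (S_{N,k})^α to its first half (s_1, ..., s_{k/2}) is a bijection from (S_{N,k})^α onto the spine class S_{(N/2 + 1), (k/2)}. -/
/-- The spine class `S_{N,k}`: tuples of `k` nonnegative integers summing to `N - k - 2`. -/
def spineClass (N k : ℕ) : Finset (Fin k → ℕ) :=
  Finset.Nat.antidiagonalTuple k (N - k - 2)

/-- The symmetric (palindromic) spines in `S_{N,k}`: the fixed points of the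
reversal action of `ℤ/2` (i.e. `s i = s (k - 1 - i)` for all `i`, 0-indexed). -/
def symSpines (N k : ℕ) : Finset (Fin k → ℕ) :=
  (spineClass N k).filter (fun s => ∀ i, s i = s i.rev)

/-- The number of orbits of `S_{N,k}` under the reversal action of `ℤ/2`:
each orbit is recorded as the (unordered) pair `{s, s ∘ rev}`. -/
def orbitCount (N k : ℕ) : ℕ :=
  ((spineClass N k).image (fun s => ({s, s ∘ Fin.rev} : Finset (Fin k → ℕ)))).card

theorem half_sum (k m : ℕ) (hm : k = m + m) (s : Fin k → ℕ) (hs : ∀ i, s i = s i.rev) :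
    ∑ i, s i = (∑ i : Fin (k/2), s (Fin.castLE (Nat.div_le_self k 2) i)) +
      (∑ i : Fin (k/2), s (Fin.castLE (Nat.div_le_self k 2) i)) := by
  have hm2 : k / 2 = m := by omega
  classical
  rw [← Finset.sum_filter_add_sum_filter_not Finset.univ (fun i : Fin k => (i : ℕ) < m)]
  have h1 : ∑ i : Fin (k/2), s (Fin.castLE (Nat.div_le_self k 2) i)
      = ∑ i ∈ Finset.univ.filter (fun i : Fin k => (i : ℕ) < m), s i := by
    refine Finset.sum_bij (fun a _ => Fin.castLE (Nat.div_le_self k 2) a) ?_ ?_ ?_ ?_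
    · intro a _; simp only [Finset.mem_filter, Finset.mem_univ, true_and, Fin.coe_castLE]
      have := a.2; omega
    · intro a _ b _ h
      exact Fin.ext (by simpa [Fin.ext_iff] using h)
    · intro b hb
      simp only [Finset.mem_filter, Finset.mem_univ, true_and] at hb
      exact ⟨⟨b.1, by omega⟩, Finset.mem_univ _, Fin.ext rfl⟩
    · intro a _; rfl
  have h2 : ∑ i ∈ Finset.univ.filter (fun i : Fin k => ¬ (i : ℕ) < m), s i
      = ∑ i ∈ Finset.univ.filter (fun i : Fin k => (i : ℕ) < m), s i := by
    refine Finset.sum_nbij' (fun i => i.rev) (fun i => i.rev) ?_ ?_ ?_ ?_ ?_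
    · intro a ha; simp only [Finset.mem_filter, Finset.mem_univ, true_and,
        Fin.val_rev] at ha ⊢
      have := a.2; omega
    · intro a ha; simp only [Finset.mem_filter, Finset.mem_univ, true_and,
        Fin.val_rev] at ha ⊢
      have := a.2; omega
    · intro a _; exact Fin.rev_rev a
    · intro a _; exact Fin.rev_rev a
    · intro a _; exact hs a
  rw [h1, h2, ← h1]

/-- For even positive `N, k` with `k ≤ N - 2`, the map sending a symmetric spine
`(s_1, …, s_k)` in `(S_{N,k})^α` to its first half `(s_1, …, s_{k/2})` is a
bijection onto the spine class `S_{N/2 + 1, k/2}`. -/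
theorem halving_bijection (N k : ℕ) (hNe : Even N) (hke : Even k)
    (hN : 0 < N) (hk : 0 < k) (hkN : k ≤ N - 2) :
    Set.BijOn (fun (s : Fin k → ℕ) (i : Fin (k / 2)) => s (Fin.castLE (Nat.div_le_self k 2) i))
      ↑(symSpines N k) ↑(spineClass (N / 2 + 1) (k / 2)) := by
  obtain ⟨q, hq⟩ := hNe
  obtain ⟨m, hmk⟩ := hke
  have hm2 : k / 2 = m := by omega
  have hmemS : ∀ s : Fin k → ℕ,
      s ∈ symSpines N k ↔ ((∑ i, s i) = N - k - 2 ∧ ∀ i, s i = s i.rev) := by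
    intro s
    simp [symSpines, spineClass, Finset.Nat.mem_antidiagonalTuple, Finset.mem_filter]
  have hmemT : ∀ t : Fin (k/2) → ℕ,
      t ∈ spineClass (N/2 + 1) (k/2) ↔ (∑ i, t i) = N/2 + 1 - k/2 - 2 := by
    intro t
    simp [spineClass, Finset.Nat.mem_antidiagonalTuple]
  have hsum : N - k - 2 = (N/2 + 1 - k/2 - 2) + (N/2 + 1 - k/2 - 2) := by omega
  have hrev : ∀ i : Fin k, (i.rev : ℕ) = k - 1 - i := by
    intro i; rw [Fin.val_rev]; omega
  refine ⟨?_, ?_, ?_⟩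
  · -- MapsTo
    intro s hs
    simp only [Finset.coe_filter, Set.mem_setOf_eq, Finset.mem_coe] at hs ⊢
    rw [hmemS] at hs
    rw [hmemT]
    have := half_sum k m hmk s hs.2
    omega
  · -- InjOn
    intro s hsmem t htmem h
    rw [Finset.mem_coe, hmemS] at hsmem htmem
    funext i
    by_cases hi : (i : ℕ) < k / 2
    · have := congrFun h (⟨(i : ℕ), hi⟩ : Fin (k/2))
      simpa [Fin.ext_iff] using this
    · have hi' : ((i.rev : Fin k) : ℕ) < k / 2 := by
        rw [hrev]; have := i.2; omega
      have := congrFun h (⟨(i.rev : ℕ), hi'⟩ : Fin (k/2))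
      simp only at this
      have hcast : Fin.castLE (Nat.div_le_self k 2) (⟨(i.rev : ℕ), hi'⟩ : Fin (k/2)) = i.rev :=
        Fin.ext rfl
      rw [hcast] at this
      rw [hsmem.2 i, htmem.2 i, this]
  · -- SurjOn
    intro t ht
    rw [Finset.mem_coe, hmemT] at ht
    classical
    set s : Fin k → ℕ := fun i =>
      if h : (i : ℕ) < k / 2 then t ⟨(i : ℕ), h⟩
      else t ⟨k - 1 - (i : ℕ), by have := i.2; omega⟩ with hsdef
    have hhalf : ∀ i : Fin (k/2), s (Fin.castLE (Nat.div_le_self k 2) i) = t i := by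
      intro i
      have hi : ((Fin.castLE (Nat.div_le_self k 2) i : Fin k) : ℕ) < k / 2 := i.2
      simp only [hsdef, dif_pos hi]
      exact congrArg t (Fin.ext rfl)
    have hsymm : ∀ i : Fin k, s i = s i.rev := by
      intro i
      have hik := i.2
      have hirev := hrev i
      by_cases hi : (i : ℕ) < k / 2
      · have h2 : ¬ ((i.rev : Fin k) : ℕ) < k / 2 := by omega
        simp only [hsdef, dif_pos hi, dif_neg h2]
        congr 1; apply Fin.ext; simp; omega
      · have h2 : ((i.rev : Fin k) : ℕ) < k / 2 := by omega
        simp only [hsdef, dif_neg hi, dif_pos h2]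
        congr 1; apply Fin.ext; simp; omega
    refine ⟨s, ?_, ?_⟩
    · rw [Finset.mem_coe, hmemS]
      refine ⟨?_, hsymm⟩
      rw [half_sum k m hmk s hsymm]
      have : ∑ i : Fin (k/2), s (Fin.castLE (Nat.div_le_self k 2) i) = ∑ i, t i :=
        Finset.sum_congr rfl (fun i _ => hhalf i)
      omega
    · funext i; exact hhalf i
end

section
/- Let N and k be even positive integers with k ≤ N - 2. The map g that sends a symmetric spine (s_1, ..., s_{k/2 - 1}, s_{k/2}, s_{k/2 + 1}, s_{k/2 + 2}, ..., s_k) in (S_{N,k})^α to the (k-1)-tuple (s_1, ..., s_{k/2 - 1}, s_{k/2} + s_{k/2 + 1}, s_{k/2 + 2}, ..., s_k) obtained by merging the two middle entries is a bijection from (S_{N,k})^α onto (S_{(N-1),(k-1)})^α. -/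
lemma fin_congr {n : ℕ} (f : Fin n → ℕ) {a b : ℕ} (ha : a < n) (hb : b < n) (h : a = b) :
    f ⟨a, ha⟩ = f ⟨b, hb⟩ := by subst h; rfl

lemma fin_app_eq {n : ℕ} (f : Fin n → ℕ) {a : ℕ} {i : Fin n} (ha : a < n) (h : a = i.val) :
    f ⟨a, ha⟩ = f i := by subst h; exact congrArg f (Fin.eta i ha)

lemma pal_pair {n : ℕ} (s : Fin n → ℕ) (hs : ∀ i, s i = s i.rev) {a b : ℕ}
    (ha : a < n) (hb : b < n) (hab : a + b = n - 1) : s ⟨a, ha⟩ = s ⟨b, hb⟩ := by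
  have h := hs ⟨a, ha⟩
  have hrev : (⟨a, ha⟩ : Fin n).rev = ⟨b, hb⟩ := by
    apply Fin.ext
    rw [Fin.val_rev]
    simp only []
    omega
  rwa [hrev] at h

lemma ext_sum {k : ℕ} (s : Fin k → ℕ) :
    ∑ i : Fin k, s i = ∑ i ∈ Finset.range k, (if h : i < k then s ⟨i, h⟩ else 0) := by
  rw [← Fin.sum_univ_eq_sum_range (fun i => if h : i < k then s ⟨i, h⟩ else 0) k]
  exact Finset.sum_congr rfl fun i _ => by simp [i.isLt]

lemma range_merge (f : ℕ → ℕ) {k p : ℕ} (hp : p + 1 < k) :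
    ∑ j ∈ Finset.range (k-1), (if j < p then f j else if j = p then f p + f (p+1) else f (j+1))
      = ∑ i ∈ Finset.range k, f i := by
  rw [← Finset.sum_range_add_sum_Ico _ (show p + 1 ≤ k - 1 by omega),
      ← Finset.sum_range_add_sum_Ico f (show p + 2 ≤ k by omega)]
  have h1 : ∑ j ∈ Finset.range (p+1),
      (if j < p then f j else if j = p then f p + f (p+1) else f (j+1))
      = ∑ j ∈ Finset.range (p+2), f j := by
    rw [Finset.sum_range_succ, Finset.sum_range_succ (n := p+1), Finset.sum_range_succ]
    have : ∑ j ∈ Finset.range p,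
        (if j < p then f j else if j = p then f p + f (p+1) else f (j+1))
        = ∑ j ∈ Finset.range p, f j :=
      Finset.sum_congr rfl fun j hj => by
        rw [if_pos (Finset.mem_range.mp hj)]
    rw [this, if_neg (by omega), if_pos rfl]
    ring
  have h2 : ∑ j ∈ Finset.Ico (p+1) (k-1),
      (if j < p then f j else if j = p then f p + f (p+1) else f (j+1))
      = ∑ j ∈ Finset.Ico (p+2) k, f j := by
    rw [Finset.sum_Ico_eq_sum_range, Finset.sum_Ico_eq_sum_range,
        show k - (p+2) = k - 1 - (p+1) by omega]
    refine Finset.sum_congr rfl fun j _ => ?_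
    rw [if_neg (by omega), if_neg (by omega), show p + 1 + j + 1 = p + 2 + j by omega]
  rw [h1, h2]

lemma range_pal (f : ℕ → ℕ) {M : ℕ} (hpal : ∀ j < 2*M+1, f j = f (2*M - j)) :
    ∑ j ∈ Finset.range (2*M+1), f j = 2 * ∑ j ∈ Finset.range M, f j + f M := by
  rw [← Finset.sum_range_add_sum_Ico f (show M + 1 ≤ 2*M+1 by omega),
      Finset.sum_range_succ]
  have h2 : ∑ j ∈ Finset.Ico (M+1) (2*M+1), f j = ∑ j ∈ Finset.range M, f j := by
    rw [Finset.sum_Ico_eq_sum_range, show 2*M+1 - (M+1) = M by omega]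
    rw [← Finset.sum_range_reflect f M]
    refine Finset.sum_congr rfl fun j hj => ?_
    have hjM := Finset.mem_range.mp hj
    rw [hpal (M+1+j) (by omega), show 2*M - (M+1+j) = M - 1 - j by omega]
  rw [h2]; ring

lemma merge_sum {k p q : ℕ} (hq : q = p + 1) (hp : q < k) (s : Fin k → ℕ) :
    ∑ j : Fin (k-1), (if (j : ℕ) < p then s ⟨j.val, by have := j.isLt; omega⟩
      else if (j : ℕ) = p then s ⟨p, by omega⟩ + s ⟨q, hp⟩
      else s ⟨j.val + 1, by have := j.isLt; omega⟩) = ∑ i, s i := by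
  subst hq
  have h0 : ∑ j : Fin (k-1), (if (j : ℕ) < p then s ⟨j.val, by have := j.isLt; omega⟩
      else if (j : ℕ) = p then s ⟨p, by omega⟩ + s ⟨p+1, hp⟩
      else s ⟨j.val + 1, by have := j.isLt; omega⟩)
      = ∑ j ∈ Finset.range (k-1), (fun j => if j < p
          then (fun i => if h : i < k then s ⟨i, h⟩ else 0) j
          else if j = p then (fun i => if h : i < k then s ⟨i, h⟩ else 0) p
            + (fun i => if h : i < k then s ⟨i, h⟩ else 0) (p+1)
          else (fun i => if h : i < k then s ⟨i, h⟩ else 0) (j+1)) j := by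
    rw [← Fin.sum_univ_eq_sum_range]
    refine Finset.sum_congr rfl fun j _ => ?_
    have hj := j.isLt
    simp only []
    by_cases h1 : (j : ℕ) < p
    · rw [if_pos h1, if_pos h1, dif_pos (by omega)]
    · rw [if_neg h1, if_neg h1]
      by_cases h2 : (j : ℕ) = p
      · rw [if_pos h2, if_pos h2, dif_pos (by omega), dif_pos hp]
      · rw [if_neg h2, if_neg h2, dif_pos (by omega)]
  rw [h0, range_merge _ hp, ← ext_sum]

lemma mem_symSpines' {N k : ℕ} (s : Fin k → ℕ) (X : Finset (Fin k → ℕ))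
    (hX : X = (Finset.Nat.antidiagonalTuple k (N - k - 2)).filter (fun s => ∀ i, s i = s i.rev)) :
    s ∈ X ↔ (∑ i, s i = N - k - 2) ∧ ∀ i, s i = s i.rev := by
  subst hX
  simp [Finset.mem_filter, Finset.Nat.mem_antidiagonalTuple, and_comm]

lemma pal_mid_even {K : ℕ} (hK : K % 2 = 1) (t : Fin K → ℕ) (hpal : ∀ i, t i = t i.rev)
    (heven : (∑ i, t i) % 2 = 0) : t ⟨K/2, by omega⟩ % 2 = 0 := by
  obtain ⟨M, hM⟩ : ∃ M, K = 2*M+1 := ⟨K/2, by omega⟩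
  subst hM
  have h1 := ext_sum t
  rw [range_pal (fun i => if h : i < 2*M+1 then t ⟨i, h⟩ else 0) (fun j hj => by
    try simp only []
    rw [dif_pos (by omega), dif_pos (by omega)]
    exact pal_pair t hpal (by omega) (by omega) (by omega))] at h1
  try simp only [] at h1
  rw [dif_pos (by omega)] at h1
  have he : t ⟨(2*M+1)/2, by omega⟩ = t ⟨M, by omega⟩ := fin_congr t _ _ (by omega)
  rw [he]
  omega


set_option maxHeartbeats 1600000

/-- For even positive `N, k` with `k ≤ N - 2`, the map merging the two middle entries
of a symmetric spine, `(s_1, …, s_{k/2}, s_{k/2+1}, …, s_k) ↦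
(s_1, …, s_{k/2-1}, s_{k/2} + s_{k/2+1}, s_{k/2+2}, …, s_k)` (written 0-indexed below),
is a bijection from `(S_{N,k})^α` onto `(S_{N-1,k-1})^α`. -/
theorem merge_bijection (N k : ℕ) (hNe : Even N) (hke : Even k)
    (hN : 0 < N) (hk : 0 < k) (hkN : k ≤ N - 2) :
    Set.BijOn
      (fun (s : Fin k → ℕ) (j : Fin (k - 1)) =>
        if j.val < k / 2 - 1 then s ⟨j.val, by have := j.isLt; omega⟩
        else if j.val = k / 2 - 1 then s ⟨k / 2 - 1, by omega⟩ + s ⟨k / 2, by omega⟩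
        else s ⟨j.val + 1, by have := j.isLt; omega⟩)
      ↑(symSpines N k) ↑(symSpines (N - 1) (k - 1)) := by
  have hk2 := Nat.even_iff.mp hke
  have hN2 := Nat.even_iff.mp hNe
  have hkk : 2 ≤ k := by omega
  have hNk : k + 2 ≤ N := by omega
  -- membership characterizations
  have memS : ∀ s : Fin k → ℕ,
      s ∈ symSpines N k ↔ (∑ i, s i = N - k - 2) ∧ ∀ i, s i = s i.rev := by
    intro s
    unfold symSpines spineClass
    rw [Finset.mem_filter, Finset.Nat.mem_antidiagonalTuple]
  have memT : ∀ t : Fin (k-1) → ℕ,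
      t ∈ symSpines (N-1) (k-1) ↔ (∑ i, t i = N - k - 2) ∧ ∀ i, t i = t i.rev := by
    intro t
    unfold symSpines spineClass
    rw [Finset.mem_filter, Finset.Nat.mem_antidiagonalTuple,
      show (N-1) - (k-1) - 2 = N - k - 2 by omega]
  -- the forward and inverse maps
  set F : (Fin k → ℕ) → Fin (k-1) → ℕ := fun (s : Fin k → ℕ) (j : Fin (k - 1)) =>
        if j.val < k / 2 - 1 then s ⟨j.val, by have := j.isLt; omega⟩
        else if j.val = k / 2 - 1 then s ⟨k / 2 - 1, by omega⟩ + s ⟨k / 2, by omega⟩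
        else s ⟨j.val + 1, by have := j.isLt; omega⟩ with hF
  set G : (Fin (k-1) → ℕ) → Fin k → ℕ := fun (t : Fin (k-1) → ℕ) (i : Fin k) =>
        if h : i.val < k / 2 - 1 then t ⟨i.val, by omega⟩
        else if i.val ≤ k / 2 then t ⟨k / 2 - 1, by omega⟩ / 2
        else t ⟨i.val - 1, by have := i.isLt; omega⟩ with hG
  -- parity of the middle entry of a symmetric spine in the target
  have hpar : ∀ t : Fin (k-1) → ℕ, t ∈ symSpines (N-1) (k-1) →
      ∀ (h : k/2 - 1 < k - 1), t ⟨k/2 - 1, h⟩ % 2 = 0 := by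
    intro t ht h
    obtain ⟨hsum, hpal⟩ := (memT t).mp ht
    have hmid := pal_mid_even (K := k-1) (by omega) t hpal (by rw [hsum]; omega)
    have he : t ⟨k/2 - 1, h⟩ = t ⟨(k-1)/2, by omega⟩ := fin_congr t _ _ (by omega)
    rw [he]
    exact hmid
  -- pointwise symmetry of F s
  have hFsym : ∀ s : Fin k → ℕ, (∀ i, s i = s i.rev) →
      ∀ j1 j2 : Fin (k-1), (j1 : ℕ) + (j2 : ℕ) = k - 2 → F s j1 = F s j2 := by
    intro s hpal j1 j2 hj
    have h1 := j1.isLt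
    have h2 := j2.isLt
    rw [hF]
    simp only []
    split_ifs <;>
      first
        | rfl
        | omega
        | (exact fin_congr s _ _ (by omega))
        | (exact pal_pair s hpal _ _ (by omega))
  -- pointwise symmetry of G t
  have hGsym : ∀ t : Fin (k-1) → ℕ, (∀ i, t i = t i.rev) →
      ∀ i1 i2 : Fin k, (i1 : ℕ) + (i2 : ℕ) = k - 1 → G t i1 = G t i2 := by
    intro t hpal i1 i2 hi
    have h1 := i1.isLt
    have h2 := i2.isLt
    rw [hG]
    simp only []
    split_ifs <;>
      first
        | rfl
        | omega
        | (exact fin_congr t _ _ (by omega))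
        | (exact pal_pair t hpal _ _ (by omega))
  -- right inverse: F (G t) = t on the target
  have hright : ∀ t : Fin (k-1) → ℕ, t ∈ symSpines (N-1) (k-1) → F (G t) = t := by
    intro t ht
    have hpt := hpar t ht
    obtain ⟨hsum, hpal⟩ := (memT t).mp ht
    funext j
    have hj := j.isLt
    rw [hF, hG]
    simp only []
    split_ifs
    all_goals try omega
    all_goals try exact fin_app_eq t _ (by omega)
    -- remaining: the middle case
    all_goals (
      have hx := hpt (by omega)
      have e3 : t j = t ⟨k/2 - 1, (by omega : k/2 - 1 < k - 1)⟩ :=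
        (fin_app_eq t _ (by omega)).symm
      rw [e3]
      omega)
  -- left inverse: G (F s) = s on the source
  have hleft : ∀ s : Fin k → ℕ, s ∈ symSpines N k → G (F s) = s := by
    intro s hs
    obtain ⟨hsum, hpal⟩ := (memS s).mp hs
    have hca : k/2 - 1 < k := by omega
    funext i
    have hi := i.isLt
    rw [hF, hG]
    simp only []
    split_ifs
    all_goals try omega
    all_goals try exact fin_app_eq s _ rfl
    all_goals try exact fin_app_eq s _ (by omega : (i:ℕ) - 1 + 1 = (i:ℕ))
    -- remaining: the middle case
    all_goals (
      rw [pal_pair s hpal (by omega : k/2 < k) hca (by omega)]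
      have e3 : s i = s ⟨k/2 - 1, hca⟩ := by
        rcases (by omega : (i : ℕ) = k/2 - 1 ∨ (i : ℕ) = k/2) with h | h
        · exact (fin_app_eq s hca h.symm).symm
        · exact ((fin_app_eq s (by omega : k/2 < k) h.symm).symm).trans
            (pal_pair s hpal (by omega) hca (by omega))
      rw [e3]
      omega)
  -- maps-to forward
  have hmapF : Set.MapsTo F ↑(symSpines N k) ↑(symSpines (N-1) (k-1)) := by
    intro s hs
    rw [Finset.mem_coe] at hs ⊢
    obtain ⟨hsum, hpal⟩ := (memS s).mp hs
    rw [memT]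
    refine ⟨?_, ?_⟩
    · rw [hF]
      exact (merge_sum (p := k/2 - 1) (q := k/2) (by omega) (by omega) s).trans hsum
    · intro j
      refine hFsym s hpal j j.rev ?_
      have h1 := Fin.val_rev j
      have h2 := j.isLt
      omega
  -- maps-to backward
  have hmapG : Set.MapsTo G ↑(symSpines (N-1) (k-1)) ↑(symSpines N k) := by
    intro t ht
    rw [Finset.mem_coe] at ht ⊢
    obtain ⟨hsum, hpal⟩ := (memT t).mp ht
    rw [memS]
    refine ⟨?_, ?_⟩
    · have h1 : ∑ j, F (G t) j = ∑ i, G t i := by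
        rw [hF]
        exact merge_sum (p := k/2 - 1) (q := k/2) (by omega) (by omega) (G t)
      rw [hright t ht] at h1
      rw [← h1, hsum]
    · intro i
      refine hGsym t hpal i i.rev ?_
      have h1 := Fin.val_rev i
      have h2 := i.isLt
      omega
  exact Set.InvOn.bijOn ⟨fun s hs => hleft s hs, fun t ht => hright t ht⟩ hmapF hmapG
end

section
/- Let N and k be even positive integers with k ≤ N - 2. Then the number of symmetric spines in S_{N,k}, the number of symmetric spines in S_{N,(k-1)}, and the number of symmetric spines in S_{(N-1),(k-1)} are all equal to the binomial coefficient C(N/2 - 2, k/2 - 1). -/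
/-!
A palindrome of even length `2m` is determined by its first half, and its sum is twice the sum
of that half; a palindrome of odd length `2m + 1` is determined by its first half and its middle
entry `c`, and its sum `2 (half) + c` has the parity of `c`. Hence the palindromic tuples of
length `2m` and sum `2T`, as well as those of length `2m + 1` and sum `2T` or `2T + 1`, are
equinumerous with the `m`-tuples, resp. the `(m + 1)`-tuples (half, `⌊c / 2⌋`), of sum `T`.
For `N = 2n`, `k = 2(p + 1)` all three spine counts thus reduce with `T = n - p - 2` to stars and
bars for `p + 1` parts, `C(T + p, T) = C(n - 2, p)`.
-/

open Finset

namespace Fin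

variable {α : Type*} {m : ℕ}

theorem append_comp_rev_apply_rev (t : Fin m → α) (i : Fin (m + m)) :
    append t (t ∘ rev) i.rev = append t (t ∘ rev) i := by
  simp [append_rev, Function.comp_def]

theorem append_snoc_comp_rev_apply_rev (t : Fin m → α) (c : α) (i : Fin (m + 1 + m)) :
    append (snoc t c) (t ∘ rev) i.rev = append (snoc t c) (t ∘ rev) i := by
  rw [append_rev, snoc_comp_rev, append_left_snoc]
  simp [Function.comp_def]

theorem append_castAdd_comp_rev_of_palindrome {s : Fin (m + m) → α}
    (hs : ∀ i, s i = s i.rev) :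
    append (fun j => s (castAdd m j)) ((fun j => s (castAdd m j)) ∘ rev) = s := by
  conv_rhs => rw [← append_castAdd_natAdd (f := s)]
  congr 1
  funext j
  rw [hs (natAdd m j), Function.comp_apply]
  congr 1
  ext
  simp
  omega

theorem append_snoc_comp_rev_of_palindrome {s : Fin (m + 1 + m) → α}
    (hs : ∀ i, s i = s i.rev) :
    append (snoc (fun j => s (castAdd m j.castSucc)) (s (castAdd m (last m))))
      ((fun j => s (castAdd m j.castSucc)) ∘ rev) = s := by
  conv_rhs => rw [← append_castAdd_natAdd (f := s)]
  congr 1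
  · funext j
    induction j using lastCases <;> simp
  · funext j
    rw [hs (natAdd (m + 1) j), Function.comp_apply]
    congr 1
    ext
    simp
    omega

variable {M : Type*} [AddCommMonoid M]

theorem sum_comp_rev (t : Fin m → M) : ∑ i, t (rev i) = ∑ i, t i :=
  Equiv.sum_comp revPerm t

theorem sum_append_comp_rev (t : Fin m → M) :
    ∑ i, append t (t ∘ rev) i = ∑ i, t i + ∑ i, t i := by
  rw [sum_univ_add]
  simp only [append_left, append_right, Function.comp_apply, sum_comp_rev]

theorem sum_append_snoc_comp_rev (t : Fin m → M) (c : M) :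
    ∑ i, append (snoc t c) (t ∘ rev) i = ∑ i, t i + c + ∑ i, t i := by
  rw [sum_univ_add]
  simp only [append_left, append_right, Function.comp_apply, sum_comp_rev, sum_snoc]

end Fin

namespace Finset.Nat

theorem card_antidiagonalTuple (k n : ℕ) :
    #(antidiagonalTuple k n) = (k + n - 1).choose n := by
  have e : antidiagonalTuple k n ≃ Sym (Fin k) n :=
    (Equiv.subtypeEquivRight fun _ => mem_antidiagonalTuple).trans
      (Sym.equivNatSumOfFintype (Fin k) n).symm
  rw [card_eq_of_equiv_fintype e, Sym.card_sym_eq_choose, Fintype.card_fin]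

theorem card_filter_palindrome_antidiagonalTuple_add_self (m T : ℕ) :
    #{s ∈ antidiagonalTuple (m + m) (T + T) | ∀ i, s i = s i.rev}
      = #(antidiagonalTuple m T) := by
  refine card_nbij' (fun s j => s (Fin.castAdd m j)) (fun t => Fin.append t (t ∘ Fin.rev))
    ?_ ?_ ?_ ?_
  · intro s hs
    simp only [coe_filter, Set.mem_ofPred_eq, mem_coe, mem_antidiagonalTuple] at hs ⊢
    obtain ⟨hsum, hpal⟩ := hs
    rw [← Fin.append_castAdd_comp_rev_of_palindrome hpal, Fin.sum_append_comp_rev] at hsum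
    omega
  · intro t ht
    simp only [mem_coe, mem_antidiagonalTuple] at ht
    simp only [coe_filter, Set.mem_ofPred_eq, mem_antidiagonalTuple, Fin.sum_append_comp_rev, ht,
      Fin.append_comp_rev_apply_rev, implies_true, and_self]
  · intro s hs
    exact Fin.append_castAdd_comp_rev_of_palindrome (mem_filter.mp hs).2
  · intro t _
    funext j
    exact Fin.append_left _ _ j

theorem card_filter_palindrome_antidiagonalTuple_add_one_add (m T : ℕ) {r : ℕ} (hr : r < 2) :
    #{s ∈ antidiagonalTuple (m + 1 + m) (T + T + r) | ∀ i, s i = s i.rev}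
      = #(antidiagonalTuple (m + 1) T) := by
  refine card_nbij'
    (fun s => Fin.snoc (fun j => s (Fin.castAdd m j.castSucc)) (s (Fin.castAdd m (Fin.last m)) / 2))
    (fun u => Fin.append (Fin.snoc (Fin.init u) (2 * u (Fin.last m) + r)) (Fin.init u ∘ Fin.rev))
    ?_ ?_ ?_ ?_
  · intro s hs
    simp only [coe_filter, Set.mem_ofPred_eq, mem_coe, mem_antidiagonalTuple] at hs ⊢
    obtain ⟨hsum, hpal⟩ := hs
    rw [← Fin.append_snoc_comp_rev_of_palindrome hpal, Fin.sum_append_snoc_comp_rev] at hsum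
    rw [Fin.sum_snoc]
    omega
  · intro u hu
    simp only [mem_coe, mem_antidiagonalTuple, Fin.sum_univ_castSucc] at hu
    simp only [coe_filter, Set.mem_ofPred_eq, mem_antidiagonalTuple, Fin.sum_append_snoc_comp_rev,
      Fin.append_snoc_comp_rev_apply_rev, Fin.init, implies_true, and_true]
    omega
  · intro s hs
    simp only [coe_filter, Set.mem_ofPred_eq, mem_antidiagonalTuple] at hs
    obtain ⟨hsum, hpal⟩ := hs
    have hmid :
        2 * (s (Fin.castAdd m (Fin.last m)) / 2) + r = s (Fin.castAdd m (Fin.last m)) := by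
      rw [← Fin.append_snoc_comp_rev_of_palindrome hpal, Fin.sum_append_snoc_comp_rev] at hsum
      omega
    simp only [Fin.init_snoc, Fin.snoc_last, hmid]
    exact Fin.append_snoc_comp_rev_of_palindrome hpal
  · intro u _
    have hlast : (2 * u (Fin.last m) + r) / 2 = u (Fin.last m) := by omega
    simp only [Fin.append_left, Fin.snoc_castSucc, Fin.snoc_last, hlast]
    exact Fin.snoc_init_self u

end Finset.Nat

theorem symSpines_card_even_general (N k : ℕ) (hNe : Even N) (hke : Even k)
    (hk : 0 < k) (hkN : k ≤ N - 2) :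
    (symSpines N k).card = Nat.choose (N / 2 - 2) (k / 2 - 1) ∧
    (symSpines N (k - 1)).card = Nat.choose (N / 2 - 2) (k / 2 - 1) ∧
    (symSpines (N - 1) (k - 1)).card = Nat.choose (N / 2 - 2) (k / 2 - 1) := by
  obtain ⟨n, rfl⟩ := hNe
  obtain ⟨m, rfl⟩ := hke
  obtain ⟨p, rfl⟩ : ∃ p, m = p + 1 := ⟨m - 1, by omega⟩
  set T := n - p - 2
  have hchoose : Nat.choose ((n + n) / 2 - 2) ((p + 1 + (p + 1)) / 2 - 1)
      = #(Nat.antidiagonalTuple (p + 1) T) := by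
    rw [Nat.card_antidiagonalTuple, show (n + n) / 2 - 2 = p + T by omega,
      show (p + 1 + (p + 1)) / 2 - 1 = p by omega, show p + 1 + T - 1 = p + T by omega]
    exact Nat.choose_symm_add
  have hodd : p + 1 + (p + 1) - 1 = p + 1 + p := by omega
  simp only [symSpines, spineClass, hchoose, hodd]
  refine ⟨?_, ?_, ?_⟩
  · rw [show n + n - (p + 1 + (p + 1)) - 2 = T + T by omega]
    exact Nat.card_filter_palindrome_antidiagonalTuple_add_self (p + 1) T
  · rw [show n + n - (p + 1 + p) - 2 = T + T + 1 by omega]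
    exact Nat.card_filter_palindrome_antidiagonalTuple_add_one_add p T one_lt_two
  · rw [show n + n - 1 - (p + 1 + p) - 2 = T + T + 0 by omega]
    exact Nat.card_filter_palindrome_antidiagonalTuple_add_one_add p T two_pos

/-- For even positive `N, k` with `k ≤ N - 2`, the numbers of symmetric spines in
`S_{N,k}`, in `S_{N,k-1}`, and in `S_{N-1,k-1}` are all equal to `C(N/2 - 2, k/2 - 1)`. -/
theorem symSpines_card_even (N k : ℕ) (hNe : Even N) (hke : Even k)
    (hN : 0 < N) (hk : 0 < k) (hkN : k ≤ N - 2) :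
    (symSpines N k).card = Nat.choose (N / 2 - 2) (k / 2 - 1) ∧
    (symSpines N (k - 1)).card = Nat.choose (N / 2 - 2) (k / 2 - 1) ∧
    (symSpines (N - 1) (k - 1)).card = Nat.choose (N / 2 - 2) (k / 2 - 1) :=
  symSpines_card_even_general N k hNe hke hk hkN
end

section
/- Let k be a positive integer and let s = (s_1, ..., s_k) and t = (t_1, ..., t_k) be two k-tuples of nonnegative integers. The caterpillar tree induced by s is isomorphic (as a simple graph) to the caterpillar tree induced by t if and only if t = s or t is the reversal of s (i.e., t_i = s_{k-i+1} for all 1 ≤ i ≤ k). -/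
/-!
Every vertex of `inducedCaterpillar s` off the spine `v_1, …, v_k` has exactly one neighbour,
while the spine vertex `v_i` has the `s_i + 2` neighbours `v_{i-1}`, `v_{i+1}` and its leaves.
An isomorphism therefore maps the spine onto the spine, and since it preserves adjacency it
restricts to an automorphism of the path `v_1 ⋯ v_k`, which is the identity or the reversal.
Comparing neighbour counts along it gives `t = s` or `t = s ∘ Fin.rev`; conversely reversing the
path is an isomorphism onto the caterpillar of the reversed tuple.
-/

/-- The caterpillar tree induced by a tuple `s = (s_1, …, s_k)` of nonnegative
integers: a path `v_0, v_1, …, v_k, v_{k+1}` (vertices `Sum.inl a`, `a : Fin (k+2)`)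
together with, for each `1 ≤ i ≤ k`, `s_i` leaves attached to `v_i`
(vertices `Sum.inr ⟨i, _⟩` for the leaves attached to `v_{i+1}`, 0-indexed). -/
def inducedCaterpillar {k : ℕ} (s : Fin k → ℕ) :
    SimpleGraph (Fin (k + 2) ⊕ (Σ i : Fin k, Fin (s i))) :=
  SimpleGraph.fromRel (fun x y =>
    match x, y with
    | .inl a, .inl b => a.val + 1 = b.val
    | .inl a, .inr ⟨i, _⟩ => a.val = i.val + 1
    | _, _ => False)

namespace SimpleGraph

def pathGraphRevIso (n : ℕ) : pathGraph n ≃g pathGraph n where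
  toEquiv := Fin.revPerm
  map_rel_iff' := by
    intro a b
    simp only [Fin.revPerm_apply, pathGraph_adj, Fin.val_rev]
    omega

variable {n : ℕ}

lemma pathGraph_embedding_zero_eq_zero_or_last (φ : pathGraph (n + 1) ↪g pathGraph (n + 1)) :
    φ 0 = 0 ∨ φ 0 = Fin.last n := by
  by_contra! h
  have hpos : 0 < (φ 0).val := Fin.pos_iff_ne_zero.mpr h.1
  have hlt : (φ 0).val < n := Fin.val_lt_last h.2
  -- The preimages of the two neighbours of `φ 0` would both be the unique neighbour `1` of `0`.
  have val_eq_one : ∀ x, (φ x).val + 1 = (φ 0).val ∨ (φ 0).val + 1 = (φ x).val → x.val = 1 := by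
    intro x hx
    have := φ.map_adj_iff.mp (pathGraph_adj.mpr hx)
    rw [pathGraph_adj, Fin.val_zero] at this
    omega
  have hsurj := Finite.injective_iff_surjective.mp φ.injective
  obtain ⟨p, hp⟩ := hsurj ⟨(φ 0).val - 1, by omega⟩
  obtain ⟨q, hq⟩ := hsurj ⟨(φ 0).val + 1, by omega⟩
  have hp' : (φ p).val = (φ 0).val - 1 := by rw [hp]
  have hq' : (φ q).val = (φ 0).val + 1 := by rw [hq]
  have hpq : p = q := Fin.ext <| by rw [val_eq_one p (by omega), val_eq_one q (by omega)]
  subst hpq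
  omega

lemma pathGraph_embedding_eq_id_of_map_zero (φ : pathGraph (n + 1) ↪g pathGraph (n + 1))
    (h0 : φ 0 = 0) : ⇑φ = id := by
  suffices ∀ m (hm : m < n + 1), (φ ⟨m, hm⟩).val = m from funext fun i => Fin.ext (this i i.2)
  intro m
  induction m using Nat.strong_induction_on with
  | _ m ih =>
    intro hm
    match m with
    | 0 => exact congrArg Fin.val h0
    | m + 1 =>
      have hadj := φ.map_adj_iff.mpr (pathGraph_adj.mpr (Or.inl rfl) :
        (pathGraph (n + 1)).Adj ⟨m, by omega⟩ ⟨m + 1, hm⟩)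
      rw [pathGraph_adj, ih m (by omega) (by omega)] at hadj
      -- `φ (m + 1)` is a neighbour of `φ m = m`, and it is not `m - 1 = φ (m - 1)`.
      refine (hadj.resolve_right fun h => ?_).symm
      obtain ⟨j, rfl⟩ : ∃ j, m = j + 1 := ⟨m - 1, by omega⟩
      have := φ.injective (Fin.ext ((ih j (by omega) (by omega)).trans (by omega)) :
        φ ⟨j, by omega⟩ = φ ⟨j + 1 + 1, hm⟩)
      exact absurd (Fin.mk.inj_iff.mp this) (by omega)

lemma pathGraph_embedding_eq_id_or_rev (φ : pathGraph n ↪g pathGraph n) :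
    ⇑φ = id ∨ ⇑φ = Fin.rev := by
  cases n with
  | zero => exact Or.inl (funext fun i => i.elim0)
  | succ n =>
    refine (pathGraph_embedding_zero_eq_zero_or_last φ).imp
      (pathGraph_embedding_eq_id_of_map_zero φ) fun h => ?_
    have hid := pathGraph_embedding_eq_id_of_map_zero ((pathGraphRevIso _).toEmbedding.comp φ)
      (by simp [pathGraphRevIso, h])
    funext i
    simpa [pathGraphRevIso, Fin.rev_eq_iff] using congrFun hid i

end SimpleGraph

open SimpleGraph

namespace inducedCaterpillar

variable {k : ℕ} {s : Fin k → ℕ}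

@[simp] lemma adj_inl_inl {a b : Fin (k + 2)} :
    (inducedCaterpillar s).Adj (.inl a) (.inl b) ↔ a.val + 1 = b.val ∨ b.val + 1 = a.val := by
  simp [inducedCaterpillar, Fin.ext_iff]
  omega

@[simp] lemma adj_inl_inr {a : Fin (k + 2)} {x : Σ i : Fin k, Fin (s i)} :
    (inducedCaterpillar s).Adj (.inl a) (.inr x) ↔ a.val = x.1.val + 1 := by
  simp [inducedCaterpillar]

@[simp] lemma adj_inr_inl {a : Fin (k + 2)} {x : Σ i : Fin k, Fin (s i)} :
    (inducedCaterpillar s).Adj (.inr x) (.inl a) ↔ a.val = x.1.val + 1 := by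
  simp [inducedCaterpillar]

@[simp] lemma not_adj_inr_inr {x y : Σ i : Fin k, Fin (s i)} :
    ¬ (inducedCaterpillar s).Adj (.inr x) (.inr y) := by
  simp [inducedCaterpillar]

/-- `spine s i` is the vertex `v_{i+1}`, the one carrying the leaves `⟨i, _⟩`. -/
def spine (s : Fin k → ℕ) (i : Fin k) : Fin (k + 2) ⊕ (Σ i : Fin k, Fin (s i)) :=
  .inl i.succ.castSucc

lemma spine_injective : Function.Injective (spine s) := fun i j h => by
  simpa [spine] using h

lemma adj_spine_spine {i j : Fin k} :
    (inducedCaterpillar s).Adj (spine s i) (spine s j) ↔ (pathGraph k).Adj i j := by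
  simp [spine, pathGraph_adj]

lemma card_neighborSet_spine (i : Fin k) :
    Nat.card ((inducedCaterpillar s).neighborSet (spine s i)) = s i + 2 := by
  have e : (inducedCaterpillar s).neighborSet (spine s i) ≃
      ({i.castSucc.castSucc, i.succ.succ} : Set (Fin (k + 2))) ⊕ Fin (s i) :=
    Equiv.subtypeSum.trans <| Equiv.sumCongr
      (Equiv.subtypeEquivRight fun a => by simp [spine, Fin.ext_iff]; omega)
      ((Equiv.subtypeEquivRight fun x => by simp [spine, Fin.ext_iff]; omega).trans
        (Equiv.sigmaSubtype i))
  rw [Nat.card_congr e, Nat.card_sum, Nat.card_coe_set_eq,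
    Set.ncard_pair (by simp [Fin.ext_iff]; omega), Nat.card_fin, add_comm]

lemma inl_mem_range_spine {a : Fin (k + 2)} :
    Sum.inl a ∈ Set.range (spine s) ↔ a.val ≠ 0 ∧ a.val ≠ k + 1 := by
  refine ⟨?_, fun h => ⟨⟨a.val - 1, by omega⟩, ?_⟩⟩
  · rintro ⟨i, hi⟩
    simp only [spine, Sum.inl.injEq] at hi
    subst hi
    simp [i.is_lt.ne]
  · simp only [spine, Sum.inl.injEq, Fin.ext_iff, Fin.val_castSucc, Fin.val_succ]
    omega

lemma neighborSet_nontrivial_iff {v : Fin (k + 2) ⊕ (Σ i : Fin k, Fin (s i))} :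
    ((inducedCaterpillar s).neighborSet v).Nontrivial ↔ v ∈ Set.range (spine s) := by
  refine ⟨fun h => ?_, ?_⟩
  · by_contra hv
    refine h.not_subsingleton ?_
    rcases v with a | x
    · rw [inl_mem_range_spine] at hv
      rintro (b | y) hb (c | z) hc <;> simp [Fin.ext_iff] at hb hc ⊢ <;> omega
    · rintro (b | y) hb (c | z) hc <;> simp [Fin.ext_iff] at hb hc ⊢
      omega
  · rintro ⟨i, rfl⟩
    exact ⟨.inl i.castSucc.castSucc, by simp [spine], .inl i.succ.succ, by simp [spine],
      by simp [Fin.ext_iff]; omega⟩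

def revIso (s : Fin k → ℕ) : inducedCaterpillar s ≃g inducedCaterpillar (s ∘ Fin.rev) where
  toEquiv := Equiv.sumCongr Fin.revPerm
    (Equiv.sigmaCongr (β₂ := fun i => Fin ((s ∘ Fin.rev) i)) Fin.revPerm
      fun _ => finCongr (by simp))
  map_rel_iff' := by
    rintro (a | x) (b | y) <;> simp [Equiv.sigmaCongr] <;> grind

lemma exists_pathGraph_embedding_of_iso {t : Fin k → ℕ}
    (f : inducedCaterpillar s ≃g inducedCaterpillar t) :
    ∃ φ : pathGraph k ↪g pathGraph k, ∀ i, f (spine s i) = spine t (φ i) := by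
  have hspine : ∀ i, f (spine s i) ∈ Set.range (spine t) := fun i => by
    rw [← neighborSet_nontrivial_iff, ← Set.nontrivial_coe_sort,
      ← (f.mapNeighborSet _).nontrivial_congr, Set.nontrivial_coe_sort, neighborSet_nontrivial_iff]
    exact Set.mem_range_self i
  choose φ hφ using hspine
  refine ⟨⟨⟨φ, fun i j h => spine_injective (f.injective ?_)⟩, fun {i j} => ?_⟩,
    fun i => (hφ i).symm⟩
  · rw [← hφ, ← hφ, h]
  · show (pathGraph k).Adj (φ i) (φ j) ↔ _
    rw [← adj_spine_spine (s := t), hφ, hφ, f.map_adj_iff, adj_spine_spine]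

end inducedCaterpillar

open inducedCaterpillar

theorem inducedCaterpillar_iso_iff_general (k : ℕ) (s t : Fin k → ℕ) :
    Nonempty (inducedCaterpillar s ≃g inducedCaterpillar t) ↔
      (t = s ∨ t = s ∘ Fin.rev) := by
  refine ⟨fun ⟨f⟩ => ?_, ?_⟩
  · obtain ⟨φ, hφ⟩ := exists_pathGraph_embedding_of_iso f
    have hst : ∀ i, s i = t (φ i) := fun i => by
      have := Nat.card_congr (f.mapNeighborSet (spine s i))
      rwa [hφ, card_neighborSet_spine, card_neighborSet_spine, Nat.add_right_cancel_iff] at this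
    rcases pathGraph_embedding_eq_id_or_rev φ with h | h
    · exact Or.inl (funext fun i => by simpa [h] using (hst i).symm)
    · exact Or.inr (funext fun i => by simpa [h] using (hst i.rev).symm)
  · rintro (rfl | rfl)
    exacts [⟨.refl⟩, ⟨revIso s⟩]

/-- Two `k`-tuples of nonnegative integers induce isomorphic caterpillar trees if and
only if they are equal or one is the reversal of the other. -/
theorem inducedCaterpillar_iso_iff (k : ℕ) (hk : 0 < k) (s t : Fin k → ℕ) :
    Nonempty (inducedCaterpillar s ≃g inducedCaterpillar t) ↔
      (t = s ∨ t = s ∘ Fin.rev) :=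
  inducedCaterpillar_iso_iff_general k s t
end
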